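/- For all x ∈ (0,1): 3x/(2+√(1-x²)) < 6(√(x+1) - √(1-x))/(4 + √(x+1) + √(1-x)) < arcsin x < ((1+2√2)π/12)·6(√(x+1) - √(1-x))/(4 + √(x+1) + √(1-x)) < πx/(2+√(1-x²)). -/

import Mathlib

/-!
Put `x = sin (2t)` with `t = arcsin x / 2 ∈ (0, π/4)`. Then `√(x+1) = sin t + cos t`,
`√(1-x) = cos t - sin t` and `√(1-x²) = cos 2t`, so the middle quantity is `6 sin t / (2 + cos t)`.
The two inner inequalities become the Cusa–Huygens inequality `3 sin t < t (2 + cos t)` and the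
bound `t (2 + cos t) / sin t < (1 + 2√2) π / 4`, the value at `π/4` of this increasing ratio.
The two outer ones are polynomial inequalities in `cos t ∈ (√2/2, 1)`.
-/

open Real Set

lemma pos_of_hasDerivAt_of_deriv_pos {f f' : ℝ → ℝ} {b : ℝ} (hf : ∀ t, HasDerivAt f (f' t) t)
    (h0 : f 0 = 0) (hf' : ∀ t ∈ Ioo 0 b, 0 < f' t) {t : ℝ} (ht : t ∈ Ioo 0 b) : 0 < f t := by
  have hmono : StrictMonoOn f (Icc 0 b) :=
    strictMonoOn_of_deriv_pos (convex_Icc 0 b) (fun u _ => (hf u).continuousAt.continuousWithinAt)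
      (fun u hu => by rw [(hf u).deriv]; exact hf' u (by rwa [interior_Icc] at hu))
  simpa [h0] using hmono (left_mem_Icc.2 (ht.1.trans ht.2).le) (Ioo_subset_Icc_self ht) ht.1

namespace Real

lemma mul_cos_lt_sin {t : ℝ} (ht : t ∈ Ioo 0 π) : t * cos t < sin t := by
  have key := pos_of_hasDerivAt_of_deriv_pos (f := fun u => sin u - u * cos u)
    (f' := fun u => u * sin u)
    (fun u => ((hasDerivAt_sin u).sub ((hasDerivAt_id u).mul (hasDerivAt_cos u))).congr_deriv
      (by simp only [id_eq]; ring))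
    (by simp) (fun u hu => mul_pos hu.1 (sin_pos_of_pos_of_lt_pi hu.1 hu.2)) ht
  linarith

lemma mul_sin_lt_two_sub_two_mul_cos {t : ℝ} (ht : t ∈ Ioo 0 π) :
    t * sin t < 2 - 2 * cos t := by
  have key := pos_of_hasDerivAt_of_deriv_pos (f := fun u => 2 - 2 * cos u - u * sin u)
    (f' := fun u => sin u - u * cos u)
    (fun u => (((hasDerivAt_const u 2).sub ((hasDerivAt_const u 2).mul (hasDerivAt_cos u))).sub
      ((hasDerivAt_id u).mul (hasDerivAt_sin u))).congr_deriv (by simp only [id_eq]; ring))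
    (by simp) (fun u hu => sub_pos.2 (mul_cos_lt_sin hu)) ht
  linarith

lemma three_mul_sin_lt_mul_two_add_cos {t : ℝ} (ht : t ∈ Ioo 0 π) :
    3 * sin t < t * (2 + cos t) := by
  have key := pos_of_hasDerivAt_of_deriv_pos (f := fun u => u * (2 + cos u) - 3 * sin u)
    (f' := fun u => 2 - 2 * cos u - u * sin u)
    (fun u => (((hasDerivAt_id u).mul ((hasDerivAt_const u 2).add (hasDerivAt_cos u))).sub
      ((hasDerivAt_const u 3).mul (hasDerivAt_sin u))).congr_deriv
      (by simp only [id_eq, Pi.add_apply]; ring))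
    (by simp) (fun u hu => sub_pos.2 (mul_sin_lt_two_sub_two_mul_cos hu)) ht
  linarith

lemma mul_one_add_two_mul_cos_lt_sin_mul_two_add_cos {t : ℝ} (ht : t ∈ Ioo 0 π) :
    t * (1 + 2 * cos t) < sin t * (2 + cos t) := by
  have key := pos_of_hasDerivAt_of_deriv_pos
    (f := fun u => sin u * (2 + cos u) - u * (1 + 2 * cos u))
    (f' := fun u => 2 * sin u * (u - sin u))
    (fun u => (((hasDerivAt_sin u).mul ((hasDerivAt_const u 2).add (hasDerivAt_cos u))).sub
      ((hasDerivAt_id u).mul ((hasDerivAt_const u 1).add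
        ((hasDerivAt_const u 2).mul (hasDerivAt_cos u))))).congr_deriv
      (by simp only [id_eq, Pi.add_apply, Pi.mul_apply]; linear_combination sin_sq_add_cos_sq u))
    (by simp)
    (fun u hu => mul_pos (mul_pos two_pos (sin_pos_of_pos_of_lt_pi hu.1 hu.2))
      (sub_pos.2 (sin_lt hu.1))) ht
  linarith

lemma strictMonoOn_mul_two_add_cos_div_sin :
    StrictMonoOn (fun t => t * (2 + cos t) / sin t) (Ioo 0 π) := by
  refine strictMonoOn_of_deriv_pos (convex_Ioo 0 π) ?_ fun t ht => ?_
  · exact ContinuousOn.div (by fun_prop) (by fun_prop)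
      fun u hu => (sin_pos_of_pos_of_lt_pi hu.1 hu.2).ne'
  rw [interior_Ioo] at ht
  have hs := sin_pos_of_pos_of_lt_pi ht.1 ht.2
  have hderiv : HasDerivAt (fun t => t * (2 + cos t) / sin t)
      (((1 * (2 + cos t) + t * (0 + -sin t)) * sin t - t * (2 + cos t) * cos t) / sin t ^ 2) t :=
    ((hasDerivAt_id t).mul ((hasDerivAt_const t 2).add (hasDerivAt_cos t))).div
      (hasDerivAt_sin t) hs.ne'
  rw [hderiv.deriv]
  refine div_pos ?_ (by positivity)
  linear_combination mul_one_add_two_mul_cos_lt_sin_mul_two_add_cos ht + t * sin_sq_add_cos_sq t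

lemma mul_two_add_cos_lt_of_lt_pi_div_four {t : ℝ} (ht : t ∈ Ioo 0 (π / 4)) :
    t * (2 + cos t) < (1 + 2 * √2) * π / 4 * sin t := by
  have hpi := pi_pos
  have hs : 0 < sin t := sin_pos_of_pos_of_lt_pi ht.1 (by linarith [ht.2])
  have key := strictMonoOn_mul_two_add_cos_div_sin ⟨ht.1, by linarith [ht.2]⟩
    ⟨by positivity, by linarith⟩ ht.2
  simp only [cos_pi_div_four, sin_pi_div_four] at key
  have hvalue : π / 4 * (2 + √2 / 2) / (√2 / 2) = (1 + 2 * √2) * π / 4 := by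
    field_simp
    linear_combination -2 * sq_sqrt (zero_le_two : (0 : ℝ) ≤ 2)
  rw [hvalue, div_lt_iff₀ hs] at key
  exact key

lemma one_add_two_mul_sqrt_two_mul_lt {c : ℝ} (hc : √2 / 2 < c) (hc1 : c < 1) :
    (1 + 2 * √2) * (1 + 2 * c ^ 2) < 4 * c * (2 + c) := by
  have h2 : √2 ^ 2 = 2 := sq_sqrt zero_le_two
  have h1 : 1 < √2 := by nlinarith [sqrt_nonneg 2]
  -- the quadratic vanishes at `c = √2/2` and at `c = (8 + 9√2)/14 > 1`
  nlinarith [mul_pos (sub_pos.2 hc) (mul_pos (by linarith : (0 : ℝ) < 4 * √2 - 2) (sub_pos.2 hc1))]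

lemma sqrt_two_div_two_lt_cos {t : ℝ} (h0 : 0 ≤ t) (h : t < π / 4) : √2 / 2 < cos t := by
  rw [← cos_pi_div_four]
  exact cos_lt_cos_of_nonneg_of_le_pi h0 (by linarith [pi_pos]) h

lemma sin_lt_sqrt_two_div_two {t : ℝ} (h0 : -(π / 2) ≤ t) (h : t < π / 4) : sin t < √2 / 2 := by
  rw [← sin_pi_div_four]
  exact sin_lt_sin_of_lt_of_le_pi_div_two h0 (by linarith [pi_pos]) h

lemma sqrt_sin_two_mul_add_one {t : ℝ} (h : 0 ≤ sin t + cos t) :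
    √(sin (2 * t) + 1) = sin t + cos t := by
  rw [sin_two_mul, show 2 * sin t * cos t + 1 = (sin t + cos t) ^ 2 by
    linear_combination -sin_sq_add_cos_sq t]
  exact sqrt_sq h

lemma sqrt_one_sub_sin_two_mul {t : ℝ} (h : sin t ≤ cos t) :
    √(1 - sin (2 * t)) = cos t - sin t := by
  rw [sin_two_mul, show 1 - 2 * sin t * cos t = (cos t - sin t) ^ 2 by
    linear_combination -sin_sq_add_cos_sq t]
  exact sqrt_sq (sub_nonneg.2 h)

end Real

theorem stmt18 (x : ℝ) (hx : x ∈ Set.Ioo (0:ℝ) 1) :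
    3*x/(2 + Real.sqrt (1 - x^2))
      < 6*(Real.sqrt (x+1) - Real.sqrt (1-x)) / (4 + Real.sqrt (x+1) + Real.sqrt (1-x)) ∧
    6*(Real.sqrt (x+1) - Real.sqrt (1-x)) / (4 + Real.sqrt (x+1) + Real.sqrt (1-x))
      < Real.arcsin x ∧
    Real.arcsin x
      < ((1 + 2*Real.sqrt 2)*Real.pi/12) *
        (6*(Real.sqrt (x+1) - Real.sqrt (1-x)) / (4 + Real.sqrt (x+1) + Real.sqrt (1-x))) ∧
    ((1 + 2*Real.sqrt 2)*Real.pi/12) *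
        (6*(Real.sqrt (x+1) - Real.sqrt (1-x)) / (4 + Real.sqrt (x+1) + Real.sqrt (1-x)))
      < Real.pi*x/(2 + Real.sqrt (1 - x^2)) := by
  obtain ⟨t, ⟨ht0, ht4⟩, rfl⟩ : ∃ t ∈ Ioo 0 (π / 4), sin (2 * t) = x :=
    ⟨arcsin x / 2, ⟨by linarith [arcsin_pos.2 hx.1], by linarith [arcsin_lt_pi_div_two.2 hx.2]⟩,
      by rw [mul_div_cancel₀ _ two_ne_zero, sin_arcsin (by linarith [hx.1]) hx.2.le]⟩
  have hpi := pi_pos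
  have hs : 0 < sin t := sin_pos_of_pos_of_lt_pi ht0 (by linarith)
  have hc : √2 / 2 < cos t := sqrt_two_div_two_lt_cos ht0.le ht4
  have hc1 : cos t < 1 := by
    simpa using cos_lt_cos_of_nonneg_of_le_pi le_rfl (by linarith) ht0
  have hsc : sin t < cos t := (sin_lt_sqrt_two_div_two (by linarith) ht4).trans hc
  have hd₂ : 0 < 2 + cos t := by linarith
  rw [arcsin_sin (by linarith) (by linarith),
    ← cos_eq_sqrt_one_sub_sin_sq (by linarith) (by linarith),
    sqrt_sin_two_mul_add_one (by linarith), sqrt_one_sub_sin_two_mul hsc.le, cos_two_mul,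
    sin_two_mul, show 6 * (sin t + cos t - (cos t - sin t)) / (4 + (sin t + cos t) + (cos t - sin t))
      = 6 * sin t / (2 + cos t) by rw [div_eq_div_iff (by linarith) hd₂.ne']; ring]
  have hd₁ : 0 < 2 + (2 * cos t ^ 2 - 1) := by nlinarith
  refine ⟨?_, ?_, ?_, ?_⟩
  · rw [div_lt_div_iff₀ hd₁ hd₂]
    nlinarith [mul_pos hs (pow_pos (sub_pos.2 hc1) 2)]
  · rw [div_lt_iff₀ hd₂]
    linarith [three_mul_sin_lt_mul_two_add_cos ⟨ht0, by linarith⟩]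
  · rw [mul_div_assoc', lt_div_iff₀ hd₂]
    linarith [mul_two_add_cos_lt_of_lt_pi_div_four ⟨ht0, ht4⟩]
  · rw [mul_div_assoc', div_lt_div_iff₀ hd₂ hd₁]
    nlinarith [mul_lt_mul_of_pos_left (one_add_two_mul_sqrt_two_mul_lt hc hc1) (mul_pos hpi hs)]
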